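/- arXiv:1811.11488 — 4 statements merged into one kernel-verified Lean document; each statement's English description precedes it below -/
import Mathlib

section
/- For integers d ≥ 2s ≥ 2, let 𝓕 be the family of all s-element subsets of {1,…,d}. Then cd₂(𝓕) = d − 2s + 2. -/
/-- The 2-colorability defect of a family `F` of subsets of `{1,…,d}` (modeled as `Fin d`). -/
noncomputable def cd2 {d : ℕ} (F : Finset (Finset (Fin d))) : ℕ :=
  sInf {k | ∃ X : Finset (Fin d), X.card = k ∧ ∃ c : Fin d → Bool,
    ∀ A ∈ F, Disjoint A X → (∃ i ∈ A, c i = true) ∧ (∃ i ∈ A, c i = false)}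

/-!
A colouring in which no `s`-set avoiding `X` is monochromatic has fewer than `s` points of each
colour outside `X`, so at most `2s - 2` points lie outside `X` (pigeonhole). Conversely, deleting
all but `2s - 2` points and colouring `s - 1` of them red and `s - 1` blue leaves no monochromatic
`s`-set.
-/

namespace Finset

variable {α : Type*}

def Bichromatic (c : α → Bool) (A : Finset α) : Prop :=
  (∃ i ∈ A, c i = true) ∧ ∃ i ∈ A, c i = false

lemma not_bichromatic_of_forall_eq {c : α → Bool} {A : Finset α} {b : Bool}
    (h : ∀ i ∈ A, c i = b) : ¬ A.Bichromatic c := by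
  rintro ⟨⟨i, hi, hit⟩, j, hj, hjf⟩
  cases b <;> simp_all

lemma exists_monochromatic_subset_card_eq (c : α → Bool) {T : Finset α} {s : ℕ}
    (hT : 2 * s ≤ #T + 1) : ∃ B ⊆ T, #B = s ∧ ∃ b, ∀ i ∈ B, c i = b := by
  have hsplit := card_filter_add_card_filter_not (s := T) (p := fun i => c i = true)
  have hclass : s ≤ #(T.filter (c · = true)) ∨ s ≤ #(T.filter (¬ c · = true)) := by omega
  rcases hclass with hclass | hclass
  · obtain ⟨B, hB, rfl⟩ := exists_subset_card_eq hclass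
    exact ⟨B, hB.trans (filter_subset _ _), rfl, true, fun i hi => (mem_filter.1 (hB hi)).2⟩
  · obtain ⟨B, hB, rfl⟩ := exists_subset_card_eq hclass
    exact ⟨B, hB.trans (filter_subset _ _), rfl, false,
      fun i hi => by simpa using (mem_filter.1 (hB hi)).2⟩

variable [Fintype α] [DecidableEq α]

lemma card_add_two_le_of_forall_bichromatic {s : ℕ} {X : Finset α} {c : α → Bool}
    (hc : ∀ A : Finset α, #A = s → Disjoint A X → A.Bichromatic c) :
    Fintype.card α + 2 ≤ #X + 2 * s := by
  by_contra! hX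
  have hXc : 2 * s ≤ #Xᶜ + 1 := by rw [card_compl]; omega
  obtain ⟨B, hB, hBs, b, hBb⟩ := exists_monochromatic_subset_card_eq c hXc
  exact not_bichromatic_of_forall_eq hBb (hc B hBs (subset_compl_iff_disjoint_right.1 hB))

lemma exists_card_eq_forall_bichromatic {s : ℕ} (hs : 1 ≤ s)
    (hα : 2 * (s - 1) ≤ Fintype.card α) :
    ∃ X : Finset α, #X = Fintype.card α - 2 * (s - 1) ∧ ∃ c : α → Bool,
      ∀ A : Finset α, #A = s → Disjoint A X → A.Bichromatic c := by
  obtain ⟨K, -, hK⟩ := exists_subset_card_eq (s := (univ : Finset α)) (by simpa using hα)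
  obtain ⟨R, hRK, hR⟩ := exists_subset_card_eq (s := K) (n := s - 1) (by omega)
  have hKR : #(K \ R) = s - 1 := by rw [card_sdiff_of_subset hRK]; omega
  refine ⟨Kᶜ, by rw [card_compl, hK], fun i => decide (i ∈ R), fun A hA hAX => ?_⟩
  have hAK : A ⊆ K := by simpa using subset_compl_iff_disjoint_right.2 hAX
  constructor
  · by_contra! hblue
    have hA : A ⊆ K \ R := fun i hi => mem_sdiff.2 ⟨hAK hi, by simpa using hblue i hi⟩
    have := card_le_card hA
    omega
  · by_contra! hred
    have hA : A ⊆ R := fun i hi => by simpa using hred i hi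
    have := card_le_card hA
    omega

end Finset

open Finset

theorem cd2_Kneser {d s : ℕ} (hs : 1 ≤ s) (hd : 2 * s ≤ d) :
    cd2 (Finset.powersetCard s (Finset.univ : Finset (Fin d))) = d - 2 * s + 2 := by
  obtain ⟨X, hX, c, hc⟩ :=
    exists_card_eq_forall_bichromatic (α := Fin d) hs (by simp only [Fintype.card_fin]; omega)
  have hXcard : #X = d - 2 * s + 2 := by rw [hX, Fintype.card_fin]; omega
  have hmem : d - 2 * s + 2 ∈ {k | ∃ X : Finset (Fin d), #X = k ∧ ∃ c : Fin d → Bool,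
      ∀ A ∈ powersetCard s univ, Disjoint A X → A.Bichromatic c} :=
    ⟨X, hXcard, c, fun A hA => hc A (mem_powersetCard_univ.1 hA)⟩
  refine le_antisymm (Nat.sInf_le hmem) (le_csInf ⟨_, hmem⟩ ?_)
  rintro k ⟨Y, rfl, c', hc'⟩
  have := card_add_two_le_of_forall_bichromatic fun A hA => hc' A (mem_powersetCard_univ.2 hA)
  rw [Fintype.card_fin] at this
  omega
end

section
/- Let G be a graph on a finite vertex set V, let 𝔽 be a finite field, and let M be a matrix over 𝔽, with rows and columns indexed by V, such that M_{i,i} ≠ 0 for every i ∈ V and M_{i,j} = 0 for every pair of distinct non-adjacent vertices i, j of G. If rank_𝔽(M) = t, then the chromatic number of the complement of G satisfies χ(Ḡ) ≤ |𝔽|^t. Equivalently, minrk_𝔽(G) ≥ log_{|𝔽|} χ(Ḡ). -/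
theorem minrank_ge_log_chromatic {V : Type} [Fintype V] [DecidableEq V]
    (G : SimpleGraph V) (F : Type) [Field F] [Fintype F] [DecidableEq F]
    (M : Matrix V V F)
    (hdiag : ∀ i, M i i ≠ 0)
    (hoff : ∀ i j, i ≠ j → ¬G.Adj i j → M i j = 0) :
    Gᶜ.chromaticNumber ≤ (Fintype.card F ^ M.rank : ℕ) := by
  classical
  -- color vertex i by the i-th row of M, viewed in the column space of Mᵀ
  set W := LinearMap.range (Matrix.transpose M).mulVecLin with hW
  have hmem : ∀ i : V, (Matrix.transpose M).mulVec (Pi.single i 1) ∈ W := fun i =>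
    ⟨Pi.single i 1, rfl⟩
  have hrow : ∀ i j : V, (Matrix.transpose M).mulVec (Pi.single i 1) j = M i j := by
    intro i j
    simp [Matrix.mulVec_single, Matrix.transpose_apply]
  let C : Gᶜ.Coloring W := SimpleGraph.Coloring.mk
    (fun i => ⟨(Matrix.transpose M).mulVec (Pi.single i 1), hmem i⟩)
    (by
      intro i j hij
      rw [SimpleGraph.compl_adj] at hij
      obtain ⟨hne, hnadj⟩ := hij
      intro hcontra
      have := congrArg (fun x : W => (x : V → F) j) hcontra
      simp only [hrow] at this
      rw [hoff i j hne hnadj] at this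
      exact hdiag j this.symm)
  have hcol : Gᶜ.Colorable (Fintype.card W) := C.colorable
  have hcard : Fintype.card W = Fintype.card F ^ M.rank := by
    rw [Module.card_eq_pow_finrank (K := F) (V := W)]
    congr 1
    rw [← Matrix.rank_transpose M]
    rfl
  rw [hcard] at hcol
  exact hcol.chromaticNumber_le
end

section
/- Let V be a finite set with |V| = n ≥ 1 and let f be a non-negative real-valued function on the subsets of V that is sub-additive, i.e., f(S₁ ∪ S₂) ≤ f(S₁) + f(S₂) for all S₁, S₂ ⊆ V. Let q be a non-negative real-valued function on the subsets of V satisfying Σ_{S : x ∈ S} q(S) ≥ 1 for every x ∈ V. Then f(V) ≤ 6 · ln(3n) · Σ_{S ⊆ V} q(S) · f(S). In particular, for every sub-additive graph function f and every n-vertex graph G, f(G) ≤ O(log n) · f*(G), where f* is the fractional relaxation of f. -/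
/-!
Greedy covering. Let `C = ∑ S, q S * f S`. Since `q` covers every point of a set `U`, double
counting gives `#U ≤ ∑ S, q S * #(S ∩ U)`, so the set `S` minimising `f S / #(S ∩ U)` satisfies
`f S ≤ C * #(S ∩ U) / #U`. Removing `S ∩ U` from `U` and repeating covers `V` by sets whose total
cost is at most `C * (1 + log n)`, because each step costs `C * k / m ≤ C * (log m - log (m - k))`;
sub-additivity bounds `f V` by that total.
-/

open Finset Real

theorem log_add_sub_div_le_log {x y : ℝ} (hx : 0 < x) (hy : 0 < y) :
    log y + (x - y) / x ≤ log x := by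
  have h := one_sub_inv_le_log_of_pos (div_pos hx hy)
  rw [log_div hx.ne' hy.ne', inv_div] at h
  have : (x - y) / x = 1 - y / x := by field_simp
  linarith

theorem one_add_log_le_log_three_mul {x : ℝ} (hx : 0 < x) : 1 + log x ≤ log (3 * x) := by
  have h3 : 1 ≤ log 3 := by
    rw [le_log_iff_exp_le (by norm_num)]
    exact exp_one_lt_three.le
  rw [log_mul (by norm_num) hx.ne']
  linarith

section GreedyCover

variable {V : Type*} [Fintype V] [DecidableEq V]

theorem card_le_sum_mul_card_inter (q : Finset V → ℝ)
    (hcov : ∀ x : V, 1 ≤ ∑ S : Finset V, if x ∈ S then q S else 0) (U : Finset V) :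
    (#U : ℝ) ≤ ∑ S : Finset V, q S * #(S ∩ U) :=
  calc (#U : ℝ) = ∑ _x ∈ U, (1 : ℝ) := by simp
    _ ≤ ∑ x ∈ U, ∑ S : Finset V, if x ∈ S then q S else 0 := sum_le_sum fun x _ => hcov x
    _ = ∑ S : Finset V, q S * #(S ∩ U) := by
      rw [sum_comm]
      refine sum_congr rfl fun S _ => ?_
      rw [sum_ite_mem, sum_const, nsmul_eq_mul, inter_comm, mul_comm]

theorem exists_mul_card_le_mul_card_inter (f q : Finset V → ℝ) (hf0 : ∀ S, 0 ≤ f S)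
    (hq0 : ∀ S, 0 ≤ q S) (hcov : ∀ x : V, 1 ≤ ∑ S : Finset V, if x ∈ S then q S else 0)
    {U : Finset V} (hU : U.Nonempty) :
    ∃ S : Finset V, (S ∩ U).Nonempty ∧
      f S * #U ≤ (∑ T : Finset V, q T * f T) * #(S ∩ U) := by
  obtain ⟨S, hS, hmin⟩ := exists_min_image {S : Finset V | (S ∩ U).Nonempty}
    (fun S => f S / #(S ∩ U)) ⟨U, by simpa using hU⟩
  rw [mem_filter] at hS
  have hk : (0 : ℝ) < #(S ∩ U) := by exact_mod_cast hS.2.card_pos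
  set ρ := f S / #(S ∩ U)
  have hρ : ∀ T : Finset V, ρ * #(T ∩ U) ≤ f T := by
    intro T
    rcases (T ∩ U).eq_empty_or_nonempty with hT | hT
    · simpa [hT] using hf0 T
    · have hkT : (0 : ℝ) < #(T ∩ U) := by exact_mod_cast hT.card_pos
      exact (le_div_iff₀ hkT).1 (hmin T (by simpa using hT))
  have hρU : ρ * #U ≤ ∑ T : Finset V, q T * f T :=
    calc ρ * #U ≤ ρ * ∑ T : Finset V, q T * #(T ∩ U) :=
          mul_le_mul_of_nonneg_left (card_le_sum_mul_card_inter q hcov U)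
            (div_nonneg (hf0 S) hk.le)
      _ = ∑ T : Finset V, q T * (ρ * #(T ∩ U)) := by
          rw [mul_sum]; exact sum_congr rfl fun T _ => by ring
      _ ≤ ∑ T : Finset V, q T * f T :=
          sum_le_sum fun T _ => mul_le_mul_of_nonneg_left (hρ T) (hq0 T)
  refine ⟨S, hS.2, ?_⟩
  calc f S * #U = ρ * #U * #(S ∩ U) := by
        rw [mul_right_comm, div_mul_cancel₀ _ hk.ne']
    _ ≤ _ := mul_le_mul_of_nonneg_right hρU hk.le

theorem exists_superset_le_mul_one_add_log (f q : Finset V → ℝ) (hf0 : ∀ S, 0 ≤ f S)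
    (hsub : ∀ S₁ S₂ : Finset V, f (S₁ ∪ S₂) ≤ f S₁ + f S₂) (hq0 : ∀ S, 0 ≤ q S)
    (hcov : ∀ x : V, 1 ≤ ∑ S : Finset V, if x ∈ S then q S else 0)
    {U : Finset V} (hU : U.Nonempty) :
    ∃ W ⊇ U, f W ≤ (∑ T : Finset V, q T * f T) * (1 + log #U) := by
  set C := ∑ T : Finset V, q T * f T
  have hC : 0 ≤ C := sum_nonneg fun T _ => mul_nonneg (hq0 T) (hf0 T)
  induction U using Finset.strongInduction with
  | H U ih =>
  obtain ⟨S, hSU, hS⟩ := exists_mul_card_le_mul_card_inter f q hf0 hq0 hcov hU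
  change f S * #U ≤ C * #(S ∩ U) at hS
  have hm : (0 : ℝ) < #U := by exact_mod_cast hU.card_pos
  have hfS : f S ≤ C * ((#U - #(U \ S)) / #U) := by
    have hcard : (#U : ℝ) - #(U \ S) = #(S ∩ U) := by
      rw [sub_eq_iff_eq_add', inter_comm]; exact_mod_cast (card_sdiff_add_card_inter U S).symm
    rwa [hcard, mul_div_assoc', le_div_iff₀ hm]
  by_cases hUS : U ⊆ S
  · refine ⟨S, hUS, ?_⟩
    rw [sdiff_eq_empty_iff_subset.2 hUS, card_empty, Nat.cast_zero, sub_zero,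
      div_self hm.ne', mul_one] at hfS
    exact hfS.trans (le_mul_of_one_le_right hC (le_add_of_nonneg_right (log_natCast_nonneg _)))
  · have hU' : (U \ S).Nonempty := sdiff_nonempty.2 hUS
    have hssub : U \ S ⊂ U := by
      obtain ⟨x, hx⟩ := hSU
      rw [mem_inter] at hx
      exact (ssubset_iff_of_subset sdiff_subset).2 ⟨x, hx.2, fun h => (mem_sdiff.1 h).2 hx.1⟩
    obtain ⟨W, hW, hfW⟩ := ih (U \ S) hssub hU'
    refine ⟨S ∪ W, fun x hx => ?_, ?_⟩
    · by_cases hxS : x ∈ S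
      · exact mem_union_left W hxS
      · exact mem_union_right S (hW (mem_sdiff.2 ⟨hx, hxS⟩))
    have hk : (0 : ℝ) < #(U \ S) := by exact_mod_cast hU'.card_pos
    calc f (S ∪ W) ≤ f S + f W := hsub S W
      _ ≤ C * ((#U - #(U \ S)) / #U) + C * (1 + log #(U \ S)) := add_le_add hfS hfW
      _ = C * (1 + (log #(U \ S) + (#U - #(U \ S)) / #U)) := by ring
      _ ≤ C * (1 + log #U) := by
          gcongr
          exact log_add_sub_div_le_log hm hk

end GreedyCover

theorem subadditive_le_log_mul_fractional {V : Type} [Fintype V] [DecidableEq V]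
    (hn : 1 ≤ Fintype.card V)
    (f : Finset V → ℝ) (hf0 : ∀ S, 0 ≤ f S)
    (hsub : ∀ S₁ S₂ : Finset V, f (S₁ ∪ S₂) ≤ f S₁ + f S₂)
    (q : Finset V → ℝ) (hq0 : ∀ S, 0 ≤ q S)
    (hcov : ∀ x : V, 1 ≤ ∑ S : Finset V, if x ∈ S then q S else 0) :
    f Finset.univ ≤ 6 * Real.log (3 * Fintype.card V) * ∑ S : Finset V, q S * f S := by
  have hV : (univ : Finset V).Nonempty := univ_nonempty_iff.2 (Fintype.card_pos_iff.1 hn)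
  obtain ⟨W, hW, hfW⟩ := exists_superset_le_mul_one_add_log f q hf0 hsub hq0 hcov hV
  rw [univ_subset_iff.1 hW, card_univ] at hfW
  have hC : 0 ≤ ∑ S : Finset V, q S * f S := sum_nonneg fun S _ => mul_nonneg (hq0 S) (hf0 S)
  have hn' : (0 : ℝ) < Fintype.card V := by exact_mod_cast hn
  have hlog : 1 + log (Fintype.card V) ≤ 6 * log (3 * Fintype.card V) := by
    have h := one_add_log_le_log_three_mul hn'
    have : 0 ≤ log (3 * (Fintype.card V : ℝ)) := log_nonneg (by linarith [(Nat.one_le_cast.2 hn : (1 : ℝ) ≤ _)])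
    linarith
  calc f univ ≤ (∑ S : Finset V, q S * f S) * (1 + log (Fintype.card V)) := hfW
    _ ≤ (∑ S : Finset V, q S * f S) * (6 * log (3 * Fintype.card V)) := by gcongr
    _ = 6 * log (3 * Fintype.card V) * ∑ S : Finset V, q S * f S := mul_comm _ _
end

section
/- For all integers d, s with d ≥ 2s ≥ 2, there exist points y₁, …, y_d on the unit sphere S^{d−2s} ⊆ ℝ^{d−2s+1} such that every open hemisphere of S^{d−2s} contains all the points {y_i : i ∈ A} for some stable s-element subset A of {1,…,d}. -/
/-!
Take `y i` to be the normalised vector `(-1)^i (1, i, i², …, i^n)` with `n = d - 2s`. For a unit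
vector `x`, `⟨x, y i⟩` has the sign of `(-1)^i W(i)`, where `W = ∑ x_j t^j` is a nonzero
polynomial of degree at most `n`; call `i` good (`AltPos W i`) when this is positive. If `W`
vanishes at no integer point, then whenever `i` and `i + 1 < d` are both good or both bad, `W`
changes sign on `(i, i + 1)`. So at most `n + 1` of the `d` cyclic steps `i ↦ i + 1 mod d`
preserve goodness, at least `2s - 1` change it, and as these changes come in pairs there are at
least `s` good indices followed by a bad one; no two of them are cyclically consecutive. Integer
zeros of `W` are first removed by a small perturbation `W + η E`, where `E` interpolates values at
these zeros that make them bad.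
-/

/-- A subset of `{1,…,d}` (modeled as `Fin d`) is stable if it contains no two
elements that are consecutive modulo `d`. -/
def Stable {d : ℕ} (A : Finset (Fin d)) : Prop :=
  ∀ i ∈ A, ∀ j ∈ A, ((i : ℕ) + 1) % d ≠ (j : ℕ)

open Finset Polynomial Filter Topology

lemma val_finRotate {d : ℕ} (i : Fin d) : (finRotate d i : ℕ) = (i + 1) % d := by
  obtain ⟨m, rfl⟩ : ∃ m, d = m + 1 := ⟨d - 1, by have := i.pos; omega⟩
  rw [coe_finRotate]
  split_ifs with h
  · simp [h]
  · rw [Nat.mod_eq_of_lt (by have := Fin.val_lt_last h; omega)]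

namespace Stable

variable {d : ℕ} {A B : Finset (Fin d)}

lemma of_forall_finRotate_notMem (h : ∀ i ∈ A, finRotate d i ∉ A) : Stable A := by
  intro i hi j hj hij
  rw [← val_finRotate, Fin.val_inj] at hij
  exact h i hi (hij ▸ hj)

lemma mono (hB : Stable B) (hAB : A ⊆ B) : Stable A :=
  fun i hi j hj => hB i (hAB hi) j (hAB hj)

end Stable

section RunEnds

variable {d : ℕ} (g : Fin d → Prop) [DecidablePred g]

def runEnds : Finset (Fin d) := {i | g i ∧ ¬ g (finRotate d i)}

lemma stable_runEnds : Stable (runEnds g) :=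
  Stable.of_forall_finRotate_notMem fun i hi hi' => by
    simp only [runEnds, mem_filter, mem_univ, true_and] at hi hi'
    exact hi.2 hi'.1

lemma card_runEnds_eq : #(runEnds g) = #{i | ¬ g i ∧ g (finRotate d i)} := by
  have hg := card_filter_add_card_filter_not (s := {i | g i}) (fun i => g (finRotate d i))
  have hgσ := card_filter_add_card_filter_not (s := {i | g (finRotate d i)}) g
  have hσ : #{i | g (finRotate d i)} = #{i | g i} := card_equiv (finRotate d) (by simp)
  simp only [filter_filter, and_comm (a := g (finRotate d _))] at hg hgσ
  rw [runEnds]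
  omega

lemma two_mul_card_runEnds_add : 2 * #(runEnds g) + #{i | g i ↔ g (finRotate d i)} = d := by
  have h := card_filter_add_card_filter_not (s := univ) (fun i => g i ↔ g (finRotate d i))
  have h' := card_filter_add_card_filter_not (s := {i | ¬ (g i ↔ g (finRotate d i))}) g
  simp only [filter_filter, card_univ, Fintype.card_fin] at h h'
  have hends : #{i | ¬ (g i ↔ g (finRotate d i)) ∧ g i} = #(runEnds g) := by
    rw [runEnds]; congr 1; ext i; simp only [mem_filter, mem_univ, true_and]; tauto
  have hstarts : #{i | ¬ (g i ↔ g (finRotate d i)) ∧ ¬ g i} =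
      #{i | ¬ g i ∧ g (finRotate d i)} := by
    congr 1; ext i; simp only [mem_filter, mem_univ, true_and]; tauto
  have := card_runEnds_eq g
  omega

lemma exists_stable_of_card_iff_finRotate_le (s : ℕ)
    (h : #{i | g i ↔ g (finRotate d i)} + 2 * s ≤ d + 1) :
    ∃ A : Finset (Fin d), #A = s ∧ Stable A ∧ ∀ i ∈ A, g i := by
  have := two_mul_card_runEnds_add g
  obtain ⟨A, hA, hcard⟩ := exists_subset_card_eq (s := runEnds g) (n := s) (by omega)
  refine ⟨A, hcard, (stable_runEnds g).mono hA, fun i hi => ?_⟩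
  have hi := hA hi
  simp only [runEnds, mem_filter] at hi
  exact hi.2.1

end RunEnds

namespace Polynomial

lemma exists_mem_Ioo_eval_eq_zero {W : ℝ[X]} {a b : ℝ} (hab : a ≤ b)
    (h : W.eval a * W.eval b < 0) : ∃ r ∈ Set.Ioo a b, W.eval r = 0 := by
  have hc := W.continuous.continuousOn (s := Set.Icc a b)
  rcases mul_neg_iff.1 h with ⟨ha, hb⟩ | ⟨ha, hb⟩
  · exact intermediate_value_Ioo' hab hc ⟨hb, ha⟩
  · exact intermediate_value_Ioo hab hc ⟨ha, hb⟩

lemma card_sign_changes_le_natDegree (W : ℝ[X]) (m : ℕ) :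
    #{i : Fin m | W.eval (i : ℝ) * W.eval ((i : ℝ) + 1) < 0} ≤ W.natDegree := by
  rcases eq_or_ne W 0 with rfl | hW
  · simp
  have hroot : ∀ i ∈ ({i : Fin m | W.eval (i : ℝ) * W.eval ((i : ℝ) + 1) < 0} : Finset _),
      ∃ r ∈ Set.Ioo (i : ℝ) (i + 1), W.eval r = 0 := fun i hi =>
    exists_mem_Ioo_eval_eq_zero (by linarith) (mem_filter.1 hi).2
  choose! r hr hr0 using hroot
  calc _ ≤ #W.roots.toFinset := card_le_card_of_injOn r
          (fun i hi => by simpa [hW] using hr0 i hi) (fun i hi j hj hij => by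
            obtain ⟨hi₁, hi₂⟩ := hr i hi
            obtain ⟨hj₁, hj₂⟩ := hr j hj
            have h₁ : (i : ℝ) < j + 1 := by linarith
            have h₂ : (j : ℝ) < i + 1 := by linarith
            norm_cast at h₁ h₂
            omega)
    _ ≤ _ := (Multiset.toFinset_card_le _).trans (card_roots' W)

lemma card_eval_natCast_eq_zero_le_natDegree {W : ℝ[X]} (hW : W ≠ 0) (d : ℕ) :
    #((range d).filter fun i : ℕ => W.eval (i : ℝ) = 0) ≤ W.natDegree :=
  calc _ ≤ #W.roots.toFinset := card_le_card_of_injOn (Nat.cast : ℕ → ℝ)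
          (fun i hi => by simp_all) Nat.cast_injective.injOn
    _ ≤ _ := (Multiset.toFinset_card_le _).trans (card_roots' W)

end Polynomial

def AltPos (W : ℝ[X]) (i : ℕ) : Prop := 0 < (-1) ^ i * W.eval (i : ℝ)

namespace AltPos

lemma eval_mul_eval_add_one_neg {W : ℝ[X]} {i : ℕ} (hi : W.eval (i : ℝ) ≠ 0)
    (hi' : W.eval ((i : ℝ) + 1) ≠ 0) (h : AltPos W i ↔ AltPos W (i + 1)) :
    W.eval (i : ℝ) * W.eval ((i : ℝ) + 1) < 0 := by
  simp only [AltPos, pow_succ, Nat.cast_succ] at h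
  rcases neg_one_pow_eq_or ℝ i with he | he <;> rw [he] at h <;>
    rcases hi.lt_or_gt with ha | ha <;> rcases hi'.lt_or_gt with hb | hb <;>
    simp_all <;> nlinarith

open Classical in
lemma card_iff_finRotate_le_natDegree_add_one (W : ℝ[X]) {d : ℕ}
    (hW : ∀ i < d, W.eval (i : ℝ) ≠ 0) :
    #{i : Fin d | AltPos W i ↔ AltPos W (finRotate d i)} ≤ W.natDegree + 1 := by
  calc _ ≤ #(({i : Fin d | (i : ℕ) + 1 = d} : Finset (Fin d)) ∪
              ({i : Fin d | W.eval (i : ℝ) * W.eval ((i : ℝ) + 1) < 0} : Finset (Fin d))) := by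
          refine card_le_card fun i hi => ?_
          simp only [mem_filter, mem_univ, true_and, mem_union] at hi ⊢
          by_cases hlast : (i : ℕ) + 1 = d
          · exact Or.inl hlast
          · rw [val_finRotate, Nat.mod_eq_of_lt (by omega)] at hi
            exact Or.inr (eval_mul_eval_add_one_neg (hW i i.2)
              (by exact_mod_cast hW (i + 1) (by omega)) hi)
    _ ≤ 1 + W.natDegree := (card_union_le _ _).trans (add_le_add
          (card_le_one.2 fun i hi j hj => by simp at hi hj; omega)
          (card_sign_changes_le_natDegree W d))
    _ = _ := add_comm _ _

lemma eventually_perturbation {W E : ℝ[X]} {i : ℕ}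
    (hE : W.eval (i : ℝ) = 0 → E.eval (i : ℝ) = -(-1) ^ i) :
    ∀ᶠ η in 𝓝[>] (0 : ℝ),
      (W + C η * E).eval (i : ℝ) ≠ 0 ∧ (AltPos (W + C η * E) i → AltPos W i) := by
  simp only [AltPos, eval_add, eval_mul, eval_C]
  by_cases hWi : W.eval (i : ℝ) = 0
  · filter_upwards [self_mem_nhdsWithin] with η (hη : 0 < η)
    have hneg : (-1) ^ i * (W.eval (i : ℝ) + η * E.eval (i : ℝ)) = -η := by
      have hsq : ((-1 : ℝ) ^ i) ^ 2 = 1 := by simp [← pow_mul, pow_mul']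
      rw [hWi, hE hWi]
      linear_combination (-η) * hsq
    rw [hneg]
    exact ⟨fun h => by rw [h, mul_zero] at hneg; linarith, fun h => by linarith⟩
  · have hcont : Continuous fun η : ℝ =>
        (-1) ^ i * (W.eval (i : ℝ) + η * E.eval (i : ℝ)) := by fun_prop
    have hlim : Tendsto (fun η : ℝ => (-1) ^ i * (W.eval (i : ℝ) + η * E.eval (i : ℝ)))
        (𝓝[>] 0) (𝓝 ((-1) ^ i * W.eval (i : ℝ))) :=
      tendsto_nhdsWithin_of_tendsto_nhds (by simpa using hcont.tendsto 0)
    rcases (mul_ne_zero (pow_ne_zero i (by norm_num : (-1 : ℝ) ≠ 0)) hWi).lt_or_gt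
      with hneg | hpos
    · filter_upwards [hlim.eventually (gt_mem_nhds hneg)] with η hη
      exact ⟨fun h => by simp [h] at hη, fun h => absurd h hη.not_gt⟩
    · filter_upwards [hlim.eventually (lt_mem_nhds hpos)] with η hη
      exact ⟨fun h => by simp [h] at hη, fun _ => hpos⟩

lemma exists_nonvanishing_perturbation {W : ℝ[X]} (hW : W ≠ 0) (d : ℕ) :
    ∃ V : ℝ[X], V.natDegree ≤ W.natDegree ∧
      ∀ i < d, V.eval (i : ℝ) ≠ 0 ∧ (AltPos V i → AltPos W i) := by
  classical
  set Z := (range d).filter fun i : ℕ => W.eval (i : ℝ) = 0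
  have hinj : Set.InjOn (Nat.cast : ℕ → ℝ) Z := Nat.cast_injective.injOn
  set E := Lagrange.interpolate Z (Nat.cast : ℕ → ℝ) fun i => -(-1 : ℝ) ^ i
  have hEdeg : E.natDegree ≤ W.natDegree := natDegree_le_of_degree_le <|
    (Lagrange.degree_interpolate_lt _ hinj).le.trans
      (by exact_mod_cast card_eval_natCast_eq_zero_le_natDegree hW d)
  have hev : ∀ᶠ η in 𝓝[>] (0 : ℝ), ∀ i ∈ range d,
      (W + C η * E).eval (i : ℝ) ≠ 0 ∧ (AltPos (W + C η * E) i → AltPos W i) :=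
    (eventually_all_finset _).2 fun i hi => eventually_perturbation fun hWi =>
      Lagrange.eval_interpolate_at_node _ hinj (mem_filter.2 ⟨hi, hWi⟩)
  obtain ⟨η, hη⟩ := hev.exists
  exact ⟨W + C η * E,
    natDegree_add_le_of_degree_le le_rfl ((natDegree_C_mul_le _ _).trans hEdeg),
    fun i hi => hη i (mem_range.2 hi)⟩

theorem exists_stable {W : ℝ[X]} (hW : W ≠ 0) {d s : ℕ} (h : W.natDegree + 2 * s ≤ d) :
    ∃ A : Finset (Fin d), #A = s ∧ Stable A ∧ ∀ i ∈ A, AltPos W i := by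
  classical
  obtain ⟨V, hVdeg, hV⟩ := exists_nonvanishing_perturbation hW d
  have hcard := card_iff_finRotate_le_natDegree_add_one V fun i hi => (hV i hi).1
  obtain ⟨A, hA, hstable, hpos⟩ :=
    exists_stable_of_card_iff_finRotate_le (fun i : Fin d => AltPos V i) s (by omega)
  exact ⟨A, hA, hstable, fun i hi => (hV i i.2).2 (hpos i hi)⟩

end AltPos

noncomputable def normalized {ι : Type*} [Fintype ι] (v : ι → ℝ) : ι → ℝ :=
  fun j => v j / √(∑ k, v k ^ 2)

section Normalized

variable {ι : Type*} [Fintype ι] {v : ι → ℝ}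

lemma sum_sq_pos_of_ne_zero (hv : v ≠ 0) : 0 < ∑ k, v k ^ 2 := by
  obtain ⟨j, hj⟩ := Function.ne_iff.1 hv
  exact Fintype.sum_pos (Pi.lt_def.2 ⟨fun k => sq_nonneg _, j, sq_pos_of_ne_zero hj⟩)

lemma sum_sq_normalized (hv : v ≠ 0) : ∑ j, normalized v j ^ 2 = 1 := by
  have h := sum_sq_pos_of_ne_zero hv
  simp_rw [normalized, div_pow, ← sum_div, Real.sq_sqrt h.le, div_self h.ne']

lemma sum_mul_normalized_pos_iff (hv : v ≠ 0) (x : ι → ℝ) :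
    0 < ∑ j, x j * normalized v j ↔ 0 < ∑ j, x j * v j := by
  simp_rw [normalized, mul_div_assoc', ← sum_div]
  exact div_pos_iff_of_pos_right (Real.sqrt_pos.2 (sum_sq_pos_of_ne_zero hv))

end Normalized

def signedMoment (n t : ℕ) : Fin (n + 1) → ℝ := fun j => (-1) ^ t * (t : ℝ) ^ (j : ℕ)

lemma signedMoment_ne_zero (n t : ℕ) : signedMoment n t ≠ 0 :=
  Function.ne_iff.2 ⟨0, by simp [signedMoment]⟩

lemma sum_mul_signedMoment {n : ℕ} (x : Fin (n + 1) → ℝ) (t : ℕ) :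
    ∑ j, x j * signedMoment n t j = (-1) ^ t * (ofFn (n + 1) x).eval (t : ℝ) := by
  simp only [signedMoment, ofFn_eq_sum_monomial, eval_finsetSum, eval_monomial, mul_sum]
  exact sum_congr rfl fun j _ => by ring

theorem gale_schrijver_general {d s : ℕ} (hd : 2 * s ≤ d) :
    ∃ y : Fin d → (Fin (d - 2 * s + 1) → ℝ),
      (∀ i, ∑ j, y i j ^ 2 = 1) ∧
      ∀ x : Fin (d - 2 * s + 1) → ℝ, ∑ j, x j ^ 2 = 1 →
        ∃ A : Finset (Fin d), A.card = s ∧ Stable A ∧ ∀ i ∈ A, 0 < ∑ j, x j * y i j := by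
  refine ⟨fun i => normalized (signedMoment (d - 2 * s) i),
    fun i => sum_sq_normalized (signedMoment_ne_zero _ _), fun x hx => ?_⟩
  have hx0 : x ≠ 0 := by rintro rfl; simp at hx
  have hW : ofFn (d - 2 * s + 1) x ≠ 0 := by simpa using (injective_ofFn _).ne hx0
  have hdeg := ofFn_natDegree_lt (Nat.le_add_left 1 (d - 2 * s)) x
  obtain ⟨A, hA, hstable, hpos⟩ := AltPos.exists_stable hW (d := d) (s := s) (by omega)
  refine ⟨A, hA, hstable, fun i hi => ?_⟩
  rw [sum_mul_normalized_pos_iff (signedMoment_ne_zero _ _), sum_mul_signedMoment]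
  exact hpos i hi

theorem gale_schrijver {d s : ℕ} (hs : 1 ≤ s) (hd : 2 * s ≤ d) :
    ∃ y : Fin d → (Fin (d - 2 * s + 1) → ℝ),
      (∀ i, ∑ j, y i j ^ 2 = 1) ∧
      ∀ x : Fin (d - 2 * s + 1) → ℝ, ∑ j, x j ^ 2 = 1 →
        ∃ A : Finset (Fin d), A.card = s ∧ Stable A ∧ ∀ i ∈ A, 0 < ∑ j, x j * y i j :=
  gale_schrijver_general hd
end
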